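/- arXiv:2404.06720 — 2 statements merged into one kernel-verified Lean document; each statement's English description precedes it below -/
import Mathlib

section
/- Let $\delta\in(0,1]$, $s\ge 2$, and let $\mathbf{y}_1,\ldots,\mathbf{y}_r\in\mathbb{R}^d$ ($r\le d$) be unit-norm vectors with $\|P_{\mathrm{Span}(\mathbf{y}_j,j<i)^\perp}(\mathbf{y}_i)\|\ge\delta$ for all $i\le r$. Then there exist $\lceil r/s\rceil$ orthonormal vectors $\mathbf{z}_1,\ldots,\mathbf{z}_{\lceil r/s\rceil}\in\mathbb{R}^d$ such that for every $\mathbf{a}\in\mathbb{R}^d$ and every $i$, $|\mathbf{z}_i^\top\mathbf{a}| \le (\sqrt r/\delta)^{s/(s-1)}\max_{j\le r}|\mathbf{y}_j^\top\mathbf{a}|$. -/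
/-!
Let `Y = [y₁ … y_r]` and let `gᵢ` be the Gram–Schmidt vectors of the `yᵢ`, so that the hypothesis
reads `‖gᵢ‖ ≥ δ`. Then `det (YᵀY) = ∏ ‖gᵢ‖² ≥ δ^{2r}`, i.e. the singular values
`σ₀ ≥ σ₁ ≥ ⋯ ≥ σ_{r-1}` of `Y` have product at least `δ^r`, while each of them is at most
`‖Y‖ ≤ √r`. Hence, for `k = ⌈r/s⌉`, `δ^r ≤ (√r)^{k-1} σ_{k-1}^{r-k+1}`, and since `s (k-1) ≤ r`
this forces `σ_{k-1} ≥ √r / C` with `C = (√r/δ)^{s/(s-1)}`. The left singular vectors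
`zᵢ = Y vᵢ / σᵢ` (`i < k`) are orthonormal, and
`|⟪zᵢ, a⟫| ≤ ‖vᵢ‖₁ maxⱼ |⟪yⱼ, a⟫| / σᵢ ≤ √r maxⱼ |⟪yⱼ, a⟫| / σᵢ ≤ C maxⱼ |⟪yⱼ, a⟫|`.
-/

open scoped InnerProductSpace RealInnerProductSpace
open Matrix Submodule Module InnerProductSpace

section GramSchmidt

variable {𝕜 E ι : Type*} [RCLike 𝕜] [NormedAddCommGroup E] [InnerProductSpace 𝕜 E]

theorem Matrix.gram_sum_smul {κ : Type*} [Fintype ι] (v : ι → E) (L : Matrix ι κ 𝕜) :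
    gram 𝕜 (fun j ↦ ∑ i, L i j • v i) = Lᴴ * gram 𝕜 v * L := by
  ext a b
  simp only [gram_apply, sum_inner, inner_sum, inner_smul_left, inner_smul_right, mul_apply,
    conjTranspose_apply, Finset.sum_mul, Finset.mul_sum, RCLike.star_def]
  exact Finset.sum_congr rfl fun _ _ ↦ Finset.sum_congr rfl fun _ _ ↦ by ring

namespace InnerProductSpace

variable (𝕜) [LinearOrder ι] [LocallyFiniteOrderBot ι] [WellFoundedLT ι]

theorem gram_gramSchmidt [Fintype ι] [DecidableEq ι] (f : ι → E) :
    gram 𝕜 (gramSchmidt 𝕜 f) = diagonal fun i ↦ (‖gramSchmidt 𝕜 f i‖ : 𝕜) ^ 2 := by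
  ext i j
  rcases eq_or_ne i j with rfl | hij
  · simp [gram_apply, inner_self_eq_norm_sq_to_K]
  · simp [gram_apply, gramSchmidt_orthogonal 𝕜 f hij, hij]

/-- The diagonal is `1` rather than the Gram–Schmidt coefficient `⟪g j, f j⟫ / ‖g j‖²`, which
is `0` where `g j = 0`; this keeps the matrix unitriangular. -/
noncomputable def gramSchmidtCoeffs (f : ι → E) : Matrix ι ι 𝕜 :=
  of fun i j ↦ if i = j then 1 else
    ⟪gramSchmidt 𝕜 f i, f j⟫_𝕜 / (‖gramSchmidt 𝕜 f i‖ : 𝕜) ^ 2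

theorem isUpperTriangular_gramSchmidtCoeffs (f : ι → E) :
    (gramSchmidtCoeffs 𝕜 f).IsUpperTriangular := fun i j (hji : j < i) ↦ by
  simp [gramSchmidtCoeffs, hji.ne', gramSchmidt_inv_triangular 𝕜 f hji]

theorem sum_gramSchmidtCoeffs_smul [Fintype ι] (f : ι → E) (j : ι) :
    ∑ i, gramSchmidtCoeffs 𝕜 f i j • gramSchmidt 𝕜 f i = f j := by
  classical
  have hjj : gramSchmidtCoeffs 𝕜 f j j = 1 := if_pos rfl
  have hc : ∀ i ∈ Finset.univ.erase j, gramSchmidtCoeffs 𝕜 f i j =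
      ⟪gramSchmidt 𝕜 f i, f j⟫_𝕜 / (‖gramSchmidt 𝕜 f i‖ : 𝕜) ^ 2 := fun i hi ↦
    if_neg (Finset.ne_of_mem_erase hi)
  rw [← Finset.add_sum_erase _ _ (Finset.mem_univ j), hjj, one_smul,
    Finset.sum_congr rfl fun i hi ↦ by rw [hc i hi]]
  conv_rhs => rw [gramSchmidt_def'' 𝕜 f j]
  congr 1
  refine (Finset.sum_subset (fun i hi ↦ Finset.mem_erase.2 ⟨(Finset.mem_Iio.1 hi).ne,
    Finset.mem_univ _⟩) fun i hi hij ↦ ?_).symm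
  have hji : j < i :=
    lt_of_le_of_ne (not_lt.1 (by simpa using hij)) (Finset.ne_of_mem_erase hi).symm
  simp [gramSchmidt_inv_triangular 𝕜 f hji]

theorem det_gram_eq_prod_norm_gramSchmidt_sq [Fintype ι] [DecidableEq ι] (f : ι → E) :
    (gram 𝕜 f).det = ∏ i, (‖gramSchmidt 𝕜 f i‖ : 𝕜) ^ 2 := by
  have hL : (gramSchmidtCoeffs 𝕜 f).det = 1 := by
    rw [det_of_isUpperTriangular (isUpperTriangular_gramSchmidtCoeffs 𝕜 f)]
    simp [gramSchmidtCoeffs]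
  conv_lhs => rw [← funext (sum_gramSchmidtCoeffs_smul 𝕜 f)]
  rw [gram_sum_smul, det_mul, det_mul, det_conjTranspose, hL, gram_gramSchmidt, det_diagonal]
  simp

theorem starProjection_orthogonal_span_Iio_eq_gramSchmidt [CompleteSpace E] (f : ι → E) (i : ι) :
    (span 𝕜 (f '' Set.Iio i))ᗮ.starProjection (f i) = gramSchmidt 𝕜 f i := by
  rw [← span_gramSchmidt_Iio 𝕜 f i]
  refine eq_starProjection_of_mem_orthogonal' (z := f i - gramSchmidt 𝕜 f i) ?_ ?_
    (add_sub_cancel _ _).symm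
  · have : span 𝕜 (gramSchmidt 𝕜 f '' Set.Iio i) ≤ (𝕜 ∙ gramSchmidt 𝕜 f i)ᗮ :=
      span_le.2 <| by
        rintro _ ⟨j, hj, rfl⟩
        exact mem_orthogonal_singleton_iff_inner_right.2 (gramSchmidt_orthogonal 𝕜 f hj.ne')
    exact orthogonal_le this (le_orthogonal_orthogonal _ (mem_span_singleton_self _))
  · refine le_orthogonal_orthogonal _ ?_
    rw [gramSchmidt_def 𝕜 f i, sub_sub_cancel]
    refine sum_mem fun j hj ↦ span_mono ?_ (starProjection_apply_mem _ _)
    exact Set.singleton_subset_iff.2 (Set.mem_image_of_mem _ (Finset.mem_Iio.1 hj))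

end InnerProductSpace

end GramSchmidt

namespace LinearMap

variable {𝕜 E F : Type*} [RCLike 𝕜]
  [NormedAddCommGroup E] [InnerProductSpace 𝕜 E] [FiniteDimensional 𝕜 E]
  [NormedAddCommGroup F] [InnerProductSpace 𝕜 F] [FiniteDimensional 𝕜 F]
  (T : E →ₗ[𝕜] F)

theorem inner_apply_eigenvectorBasis_adjoint_comp_self {n : ℕ} (hn : finrank 𝕜 E = n)
    (i j : Fin n) :
    ⟪T (T.isSymmetric_adjoint_comp_self.eigenvectorBasis hn i),
      T (T.isSymmetric_adjoint_comp_self.eigenvectorBasis hn j)⟫_𝕜 =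
      if i = j then (T.singularValues i : 𝕜) ^ 2 else 0 := by
  rw [← adjoint_inner_right, ← comp_apply, IsSymmetric.apply_eigenvectorBasis, inner_smul_right,
    ← T.sq_singularValues_fin hn, orthonormal_iff_ite.1 (OrthonormalBasis.orthonormal _)]
  split_ifs with h <;> simp [h]

theorem singularValues_le_norm_toContinuousLinearMap (i : ℕ) :
    T.singularValues i ≤ ‖LinearMap.toContinuousLinearMap T‖ := by
  rcases lt_or_ge i (finrank 𝕜 E) with hi | hi
  · set b := T.isSymmetric_adjoint_comp_self.eigenvectorBasis rfl
    have hnorm : ‖T (b ⟨i, hi⟩)‖ = T.singularValues i := by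
      have h := T.inner_apply_eigenvectorBasis_adjoint_comp_self rfl ⟨i, hi⟩ ⟨i, hi⟩
      rw [if_pos rfl, inner_self_eq_norm_sq_to_K] at h
      exact (pow_left_inj₀ (norm_nonneg _) (T.singularValues_nonneg i) two_ne_zero).1
        (by exact_mod_cast h)
    calc T.singularValues i = ‖LinearMap.toContinuousLinearMap T (b ⟨i, hi⟩)‖ := hnorm.symm
      _ ≤ ‖LinearMap.toContinuousLinearMap T‖ * ‖b ⟨i, hi⟩‖ := ContinuousLinearMap.le_opNorm _ _
      _ = ‖LinearMap.toContinuousLinearMap T‖ := by rw [b.orthonormal.1, mul_one]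
  · rw [T.singularValues_of_finrank_le hi]
    exact norm_nonneg _

theorem exists_orthonormal_apply_eq_singularValues_smul {k : ℕ} (hk : k ≤ finrank 𝕜 E)
    (hpos : ∀ i < k, 0 < T.singularValues i) :
    ∃ (v : Fin k → E) (z : Fin k → F), Orthonormal 𝕜 v ∧ Orthonormal 𝕜 z ∧
      ∀ i, T (v i) = (T.singularValues i : 𝕜) • z i := by
  set b := T.isSymmetric_adjoint_comp_self.eigenvectorBasis rfl
  have hσ : ∀ i : Fin k, (T.singularValues i : 𝕜) ≠ 0 := fun i ↦
    RCLike.ofReal_ne_zero.2 (hpos i i.2).ne'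
  refine ⟨fun i ↦ b (Fin.castLE hk i),
    fun i ↦ (T.singularValues i : 𝕜)⁻¹ • T (b (Fin.castLE hk i)),
    b.orthonormal.comp _ (Fin.castLE_injective hk), ?_, fun i ↦ by rw [smul_inv_smul₀ (hσ i)]⟩
  rw [orthonormal_iff_ite]
  intro i j
  rw [inner_smul_left, inner_smul_right, T.inner_apply_eigenvectorBasis_adjoint_comp_self rfl]
  simp only [Fin.castLE_inj, Fin.val_castLE]
  split_ifs with hij
  · subst hij
    rw [map_inv₀, RCLike.conj_ofReal]
    field_simp [hσ i]
  · simp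

end LinearMap

theorem Antitone.prod_range_le_pow_mul_pow {σ : ℕ → ℝ} (hσ : Antitone σ) (h0 : ∀ i, 0 ≤ σ i)
    {B : ℝ} (hB : ∀ i, σ i ≤ B) {k n : ℕ} (hkn : k ≤ n) :
    ∏ i ∈ Finset.range n, σ i ≤ B ^ k * σ k ^ (n - k) := by
  rw [← Finset.prod_range_mul_prod_Ico _ hkn]
  refine mul_le_mul ?_ ?_ (Finset.prod_nonneg fun i _ ↦ h0 i) (pow_nonneg ((h0 0).trans (hB 0)) k)
  · simpa using Finset.prod_le_prod (fun i _ ↦ h0 i) fun i (_ : i ∈ Finset.range k) ↦ hB i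
  · simpa using Finset.prod_le_prod (fun i _ ↦ h0 i)
      fun i (hi : i ∈ Finset.Ico k n) ↦ hσ (Finset.mem_Ico.1 hi).1

theorem div_rpow_pow_mul_pow_le {δ B s : ℝ} {m n : ℕ} (hδ : 0 < δ) (hδB : δ ≤ B) (hs : 1 < s)
    (hmn : s * m ≤ n) : (B / (B / δ) ^ (s / (s - 1))) ^ (n - m) * B ^ m ≤ δ ^ n := by
  have hB : 0 < B := hδ.trans_le hδB
  have hm : m ≤ n := by
    exact_mod_cast (le_mul_of_one_le_left (Nat.cast_nonneg m) hs.le).trans hmn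
  have hexp : (n : ℝ) ≤ s / (s - 1) * ((n - m : ℕ) : ℝ) := by
    rw [Nat.cast_sub hm, div_mul_eq_mul_div, le_div_iff₀ (by linarith)]
    nlinarith
  have hpow : (B / δ) ^ n ≤ ((B / δ) ^ (s / (s - 1))) ^ (n - m) := by
    rw [← Real.rpow_natCast, ← Real.rpow_natCast, ← Real.rpow_mul (by positivity)]
    exact Real.rpow_le_rpow_of_exponent_le ((one_le_div hδ).2 hδB) hexp
  calc (B / (B / δ) ^ (s / (s - 1))) ^ (n - m) * B ^ m
      = B ^ n / ((B / δ) ^ (s / (s - 1))) ^ (n - m) := by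
        rw [div_pow, div_mul_eq_mul_div, ← pow_add, Nat.sub_add_cancel hm]
    _ ≤ B ^ n / (B / δ) ^ n := div_le_div_of_nonneg_left (by positivity) (by positivity) hpow
    _ = δ ^ n := by rw [← div_pow, div_div_cancel₀ hB.ne']

theorem Antitone.div_rpow_le_of_pow_le_prod {σ : ℕ → ℝ} (hσ : Antitone σ) (h0 : ∀ i, 0 ≤ σ i)
    {δ B s : ℝ} (hB : ∀ i, σ i ≤ B) (hδ : 0 < δ) (hδB : δ ≤ B) (hs : 1 < s) {m n : ℕ}
    (hmn : m < n) (hsmn : s * m ≤ n) (hprod : δ ^ n ≤ ∏ i ∈ Finset.range n, σ i) :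
    ∀ i ≤ m, B / (B / δ) ^ (s / (s - 1)) ≤ σ i := by
  have hB0 : 0 < B := hδ.trans_le hδB
  have hC : 0 ≤ B / (B / δ) ^ (s / (s - 1)) :=
    div_nonneg hB0.le (Real.rpow_nonneg (div_nonneg hB0.le hδ.le) _)
  have key : (B / (B / δ) ^ (s / (s - 1))) ^ (n - m) * B ^ m ≤ σ m ^ (n - m) * B ^ m :=
    calc _ ≤ δ ^ n := div_rpow_pow_mul_pow_le hδ hδB hs hsmn
      _ ≤ _ := hprod
      _ ≤ B ^ m * σ m ^ (n - m) := hσ.prod_range_le_pow_mul_pow h0 hB hmn.le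
      _ = _ := mul_comm _ _
  have hm := (pow_le_pow_iff_left₀ hC (h0 m) (by omega)).1
    (le_of_mul_le_mul_right key (pow_pos hB0 m))
  exact fun i hi ↦ hm.trans (hσ hi)

theorem mul_natCast_ceil_div_sub_one_le {x s : ℝ} (hx : 0 ≤ x) (hs : 0 < s) :
    s * ((⌈x / s⌉₊ - 1 : ℕ) : ℝ) ≤ x := by
  rcases Nat.eq_zero_or_pos ⌈x / s⌉₊ with h | h
  · simpa [h] using hx
  have := Nat.ceil_lt_add_one (div_nonneg hx hs.le)
  rw [Nat.cast_sub h, Nat.cast_one]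
  calc s * (⌈x / s⌉₊ - 1) ≤ s * (x / s) := by gcongr; linarith
    _ = x := mul_div_cancel₀ x hs.ne'

namespace EuclideanSpace

variable {ι F : Type*} [Fintype ι] [NormedAddCommGroup F] [InnerProductSpace ℝ F]

theorem sum_abs_le_sqrt_card_mul_norm (c : EuclideanSpace ℝ ι) :
    ∑ j, |c j| ≤ √(Fintype.card ι) * ‖c‖ := by
  rw [EuclideanSpace.norm_eq, ← Real.sqrt_mul (Nat.cast_nonneg _)]
  apply Real.le_sqrt_of_sq_le
  simpa [sq_abs] using sq_sum_le_card_mul_sum_sq (s := Finset.univ) (f := fun j ↦ |c j|)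

/-- The matrix `Y = [y₁ … y_r]` of the paper. -/
noncomputable def synthesis (y : ι → F) : EuclideanSpace ℝ ι →ₗ[ℝ] F :=
  (EuclideanSpace.basisFun ι ℝ).toBasis.constr ℝ y

theorem synthesis_apply (y : ι → F) (c : EuclideanSpace ℝ ι) :
    synthesis y c = ∑ j, c j • y j := by
  simp [synthesis, Module.Basis.constr_apply_fintype]

theorem synthesis_basisFun (y : ι → F) (j : ι) :
    synthesis y (EuclideanSpace.basisFun ι ℝ j) = y j := by
  rw [← OrthonormalBasis.coe_toBasis]
  exact (EuclideanSpace.basisFun ι ℝ).toBasis.constr_basis ℝ y j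

theorem norm_synthesis_le {y : ι → F} (hy : ∀ j, ‖y j‖ ≤ 1) (c : EuclideanSpace ℝ ι) :
    ‖synthesis y c‖ ≤ √(Fintype.card ι) * ‖c‖ := by
  rw [synthesis_apply]
  refine (norm_sum_le _ _).trans <| le_trans ?_ (sum_abs_le_sqrt_card_mul_norm c)
  refine Finset.sum_le_sum fun j _ ↦ ?_
  rw [norm_smul, Real.norm_eq_abs]
  exact mul_le_of_le_one_right (abs_nonneg _) (hy j)

theorem abs_inner_synthesis_le (y : ι → F) (c : EuclideanSpace ℝ ι) (a : F)
    (hι : (Finset.univ : Finset ι).Nonempty) :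
    |⟪synthesis y c, a⟫| ≤ √(Fintype.card ι) * ‖c‖ * Finset.univ.sup' hι fun j ↦ |⟪y j, a⟫| := by
  set M := Finset.univ.sup' hι fun j ↦ |⟪y j, a⟫|
  have hM : 0 ≤ M :=
    (abs_nonneg _).trans (Finset.le_sup' (fun j ↦ |⟪y j, a⟫|) (Finset.mem_univ hι.choose))
  calc |⟪synthesis y c, a⟫| = |∑ j, c j * ⟪y j, a⟫| := by
        simp [synthesis_apply, sum_inner, inner_smul_left]
    _ ≤ ∑ j, |c j| * M := by
        refine (Finset.abs_sum_le_sum_abs _ _).trans (Finset.sum_le_sum fun j _ ↦ ?_)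
        rw [abs_mul]
        exact mul_le_mul_of_nonneg_left (Finset.le_sup' (fun j ↦ |⟪y j, a⟫|) (Finset.mem_univ j))
          (abs_nonneg _)
    _ ≤ √(Fintype.card ι) * ‖c‖ * M := by
        rw [← Finset.sum_mul]
        exact mul_le_mul_of_nonneg_right (sum_abs_le_sqrt_card_mul_norm c) hM

theorem abs_inner_le_of_synthesis_eq_smul {y : ι → F} {v : EuclideanSpace ℝ ι} {z : F} {σ : ℝ}
    (hv : ‖v‖ = 1) (hσ : 0 < σ) (h : synthesis y v = σ • z) (a : F)
    (hι : (Finset.univ : Finset ι).Nonempty) :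
    |⟪z, a⟫| ≤ √(Fintype.card ι) / σ * Finset.univ.sup' hι fun j ↦ |⟪y j, a⟫| := by
  have hσz := abs_inner_synthesis_le y v a hι
  rw [h, hv, mul_one, real_inner_smul_left, abs_mul, abs_of_pos hσ] at hσz
  rw [div_mul_eq_mul_div, le_div_iff₀ hσ, mul_comm]
  exact hσz

theorem singularValues_synthesis_le [FiniteDimensional ℝ F] {y : ι → F} (hy : ∀ j, ‖y j‖ ≤ 1)
    (i : ℕ) : (synthesis y).singularValues i ≤ √(Fintype.card ι) :=
  ((synthesis y).singularValues_le_norm_toContinuousLinearMap i).trans <|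
    ContinuousLinearMap.opNorm_le_bound _ (Real.sqrt_nonneg _) (norm_synthesis_le hy)

theorem exists_orthonormal_abs_inner_le [FiniteDimensional ℝ F] (y : ι → F) {k : ℕ}
    (hk : k ≤ Fintype.card ι) {t : ℝ} (ht : 0 < t)
    (hσ : ∀ i < k, t ≤ (synthesis y).singularValues i) (hι : (Finset.univ : Finset ι).Nonempty) :
    ∃ z : Fin k → F, Orthonormal ℝ z ∧ ∀ (a : F) (i : Fin k),
      |⟪z i, a⟫| ≤ √(Fintype.card ι) / t * Finset.univ.sup' hι fun j ↦ |⟪y j, a⟫| := by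
  obtain ⟨v, z, hv, hz, hyv⟩ := (synthesis y).exists_orthonormal_apply_eq_singularValues_smul
    (by simpa using hk) fun i hi ↦ ht.trans_le (hσ i hi)
  refine ⟨z, hz, fun a i ↦ ?_⟩
  have hM : 0 ≤ Finset.univ.sup' hι fun j ↦ |⟪y j, a⟫| :=
    (abs_nonneg _).trans (Finset.le_sup' (fun j ↦ |⟪y j, a⟫|) (Finset.mem_univ hι.choose))
  calc |⟪z i, a⟫| ≤ √(Fintype.card ι) / (synthesis y).singularValues i * _ :=
        abs_inner_le_of_synthesis_eq_smul (hv.1 i) (ht.trans_le (hσ i i.2))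
          (by simpa using hyv i) a hι
    _ ≤ √(Fintype.card ι) / t * _ := by gcongr; exact hσ i i.2

variable [LinearOrder ι] [LocallyFiniteOrderBot ι] [WellFoundedLT ι] [DecidableEq ι]

theorem normDet_synthesis (y : ι → F) :
    (synthesis y).normDet = ∏ i, ‖gramSchmidt ℝ y i‖ := by
  have h := (synthesis y).normDet_sq_eq_det_gram (EuclideanSpace.basisFun ι ℝ)
  simp only [synthesis_basisFun, det_gram_eq_prod_norm_gramSchmidt_sq, Finset.prod_pow,
    RCLike.ofReal_real_eq_id, id] at h
  exact (pow_left_inj₀ (LinearMap.normDet_nonneg _) (by positivity) two_ne_zero).1 h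

theorem pow_card_le_prod_singularValues_synthesis [FiniteDimensional ℝ F] {y : ι → F} {δ : ℝ}
    (hδ : 0 ≤ δ) (hy : ∀ i, δ ≤ ‖gramSchmidt ℝ y i‖) :
    δ ^ Fintype.card ι ≤ ∏ i ∈ Finset.range (Fintype.card ι), (synthesis y).singularValues i := by
  rw [← finrank_euclideanSpace (𝕜 := ℝ), ← LinearMap.normDet_eq_prod_singularValues,
    normDet_synthesis, finrank_euclideanSpace]
  simpa using Finset.prod_le_prod (fun _ _ ↦ hδ) fun i (_ : i ∈ Finset.univ) ↦ hy i

end EuclideanSpace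

theorem orthonormal_from_robustly_independent_general
    (d r : ℕ) (hr : 0 < r) (δ : ℝ) (hδ0 : 0 < δ) (hδ1 : δ ≤ 1)
    (s : ℝ) (hs : 2 ≤ s)
    (y : Fin r → EuclideanSpace ℝ (Fin d))
    (hunit : ∀ i, ‖y i‖ = 1)
    (hrobust : ∀ i : Fin r,
      δ ≤ ‖(Submodule.orthogonalProjection (Submodule.span ℝ (y '' {j | j < i}))ᗮ
            (y i) : EuclideanSpace ℝ (Fin d))‖) :
    ∃ z : Fin ⌈(r : ℝ) / s⌉₊ → EuclideanSpace ℝ (Fin d),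
      Orthonormal ℝ z ∧
      ∀ (a : EuclideanSpace ℝ (Fin d)) (i : Fin ⌈(r : ℝ) / s⌉₊),
        |⟪z i, a⟫| ≤ (Real.sqrt r / δ) ^ (s / (s - 1)) *
          (Finset.univ.sup' (Finset.univ_nonempty_iff.mpr (Fin.pos_iff_nonempty.mp hr)) fun j => |⟪y j, a⟫|) := by
  set Y := EuclideanSpace.synthesis y
  set C := (√r / δ) ^ (s / (s - 1))
  have hrpos : (0 : ℝ) < r := Nat.cast_pos.2 hr
  have hkr : ⌈(r : ℝ) / s⌉₊ ≤ r := Nat.ceil_le.2 (div_le_self hrpos.le (by linarith))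
  have hgs : ∀ i, δ ≤ ‖gramSchmidt ℝ y i‖ := fun i ↦ by
    simpa only [show {j | j < i} = Set.Iio i from rfl, coe_orthogonalProjectionOnto_apply,
      starProjection_orthogonal_span_Iio_eq_gramSchmidt] using hrobust i
  have hσB : ∀ i, Y.singularValues i ≤ √r := by
    simpa using EuclideanSpace.singularValues_synthesis_le fun j ↦ (hunit j).le
  have hprod : δ ^ r ≤ ∏ i ∈ Finset.range r, Y.singularValues i := by
    simpa using EuclideanSpace.pow_card_le_prod_singularValues_synthesis hδ0.le hgs
  have hσ : ∀ i < ⌈(r : ℝ) / s⌉₊, √r / C ≤ Y.singularValues i := fun i hi ↦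
    Y.singularValues_antitone.div_rpow_le_of_pow_le_prod Y.singularValues_nonneg hσB hδ0
      (hδ1.trans (Real.one_le_sqrt.2 (Nat.one_le_cast.2 hr))) (by linarith) (by omega)
      (mul_natCast_ceil_div_sub_one_le hrpos.le (by linarith)) hprod i (by omega)
  obtain ⟨z, hz, hza⟩ := EuclideanSpace.exists_orthonormal_abs_inner_le y (by simpa using hkr)
    (by positivity) hσ (Finset.univ_nonempty_iff.mpr (Fin.pos_iff_nonempty.mp hr))
  refine ⟨z, hz, fun a i ↦ (hza a i).trans_eq ?_⟩
  rw [Fintype.card_fin, div_div_cancel₀ (Real.sqrt_pos.2 hrpos).ne']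

/-- Under the robust-independence hypothesis there exist `⌈r/s⌉` orthonormal
vectors `z i` such that `|⟪z i, a⟫| ≤ (√r/δ)^{s/(s-1)} · max_j |⟪y j, a⟫|` for all `a`. -/
theorem orthonormal_from_robustly_independent
    (d r : ℕ) (hr : 0 < r) (hrd : r ≤ d) (δ : ℝ) (hδ0 : 0 < δ) (hδ1 : δ ≤ 1)
    (s : ℝ) (hs : 2 ≤ s)
    (y : Fin r → EuclideanSpace ℝ (Fin d))
    (hunit : ∀ i, ‖y i‖ = 1)
    (hrobust : ∀ i : Fin r,
      δ ≤ ‖(Submodule.orthogonalProjection (Submodule.span ℝ (y '' {j | j < i}))ᗮ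
            (y i) : EuclideanSpace ℝ (Fin d))‖) :
    ∃ z : Fin ⌈(r : ℝ) / s⌉₊ → EuclideanSpace ℝ (Fin d),
      Orthonormal ℝ z ∧
      ∀ (a : EuclideanSpace ℝ (Fin d)) (i : Fin ⌈(r : ℝ) / s⌉₊),
        |⟪z i, a⟫| ≤ (Real.sqrt r / δ) ^ (s / (s - 1)) *
          (Finset.univ.sup' (Finset.univ_nonempty_iff.mpr (Fin.pos_iff_nonempty.mp hr)) fun j => |⟪y j, a⟫|) :=
  orthonormal_from_robustly_independent_general d r hr δ hδ0 hδ1 s hs y hunit hrobust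
end

section
/- Let $J\ge 1$ and let $(V^{(j)}, F^{(j)})_{j\in[J]}$ be i.i.d. pairs of random variables (with densities) such that for each $j$, $V^{(j)}$ and $F^{(j)}$ are independent. Let $\hat j\in[J]$ be any random index that is a measurable function of all the pairs. Then the mutual information of the selected pair satisfies $I(V^{(\hat j)}; F^{(\hat j)}) \le \ln J + \frac{2}{e} \le \ln J + 1$. -/
open MeasureTheory ProbabilityTheory

/-- The mutual information associated with a joint law `μ` on `α × β`: the Kullback–Leibler
divergence `∫ ln (dμ/d(μ₁ ⊗ μ₂)) dμ` of `μ` with respect to the product of its marginals. -/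
noncomputable def mutualInfoOfJoint {α β : Type*} [MeasurableSpace α] [MeasurableSpace β]
    (μ : Measure (α × β)) : ℝ :=
  ∫ p, Real.log ((μ.rnDeriv ((μ.map Prod.fst).prod (μ.map Prod.snd)) p).toReal) ∂μ

/-!
By a union bound over the `J` indices, the law `μ` of the selected pair is at most `J` times
the common law `ν₁ ⊗ ν₂` of a single pair. Hence `dμ/d(ν₁ ⊗ ν₂) ≤ J`, which bounds
`KL(μ ‖ ν₁ ⊗ ν₂)` by `ln J` and makes all the log-densities involved integrable. Because
`ν₁ ⊗ ν₂` is a product, the mutual information splits as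
`I(μ) = KL(μ ‖ ν₁ ⊗ ν₂) - KL(μ₁ ‖ ν₁) - KL(μ₂ ‖ ν₂)`, and Gibbs' inequality discards the two
marginal terms, so in fact `I(μ) ≤ ln J`.
-/

open scoped ENNReal NNReal

namespace MeasureTheory

section

variable {α : Type*} [MeasurableSpace α] {μ ν : Measure α}

lemma Measure.rnDeriv_le_of_le_smul [SigmaFinite ν] {c : ℝ≥0∞} (h : μ ≤ c • ν) :
    μ.rnDeriv ν ≤ᵐ[ν] fun _ ↦ c := by
  refine ae_le_of_forall_setLIntegral_le_of_sigmaFinite (μ.measurable_rnDeriv ν) fun s _ _ ↦ ?_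
  calc ∫⁻ x in s, μ.rnDeriv ν x ∂ν ≤ μ s := Measure.setLIntegral_rnDeriv_le s
    _ ≤ (c • ν) s := h s
    _ = ∫⁻ _ in s, c ∂ν := by rw [setLIntegral_const, Measure.smul_apply, smul_eq_mul, mul_comm]

lemma integrable_llr_of_le_smul [IsFiniteMeasure μ] [IsFiniteMeasure ν] {c : ℝ≥0}
    (h : μ ≤ (c : ℝ≥0∞) • ν) : Integrable (llr μ ν) μ := by
  rw [← integrable_rnDeriv_mul_log_iff (Measure.absolutelyContinuous_of_le_smul h)]
  obtain ⟨C, hC⟩ := isCompact_Icc.exists_bound_of_continuousOn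
    (Real.continuous_mul_log.continuousOn (s := Set.Icc 0 (c : ℝ)))
  refine Integrable.of_bound (by fun_prop) C ?_
  filter_upwards [Measure.rnDeriv_le_of_le_smul h, Measure.rnDeriv_lt_top μ ν] with x hle hlt
  exact hC _ ⟨ENNReal.toReal_nonneg, ENNReal.toReal_le_coe_of_le_coe hle⟩

lemma integral_llr_le_log_of_le_smul [IsProbabilityMeasure μ] [IsFiniteMeasure ν] {c : ℝ≥0}
    (h : μ ≤ (c : ℝ≥0∞) • ν) : ∫ x, llr μ ν x ∂μ ≤ Real.log c := by
  have hμν := Measure.absolutelyContinuous_of_le_smul h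
  calc ∫ x, llr μ ν x ∂μ ≤ ∫ _, Real.log c ∂μ := by
        refine integral_mono_ae (integrable_llr_of_le_smul h) (integrable_const _) ?_
        filter_upwards [hμν.ae_le (Measure.rnDeriv_le_of_le_smul h),
          hμν.ae_le (Measure.rnDeriv_lt_top μ ν), Measure.rnDeriv_pos hμν] with x hle hlt hpos
        exact Real.log_le_log (ENNReal.toReal_pos hpos.ne' hlt.ne)
          (ENNReal.toReal_le_coe_of_le_coe hle)
    _ = Real.log c := by simp

end

variable {α β : Type*} [MeasurableSpace α] [MeasurableSpace β]

lemma Measure.rnDeriv_prod_prod {μ₁ ν₁ : Measure α} {μ₂ ν₂ : Measure β}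
    [SigmaFinite μ₁] [SigmaFinite ν₁] [SigmaFinite μ₂] [SigmaFinite ν₂]
    (h₁ : μ₁ ≪ ν₁) (h₂ : μ₂ ≪ ν₂) :
    (μ₁.prod μ₂).rnDeriv (ν₁.prod ν₂) =ᵐ[ν₁.prod ν₂]
      fun z ↦ μ₁.rnDeriv ν₁ z.1 * μ₂.rnDeriv ν₂ z.2 := by
  conv_lhs => rw [← Measure.withDensity_rnDeriv_eq _ _ h₁,
    ← Measure.withDensity_rnDeriv_eq _ _ h₂,
    prod_withDensity (Measure.measurable_rnDeriv _ _) (Measure.measurable_rnDeriv _ _)]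
  exact Measure.rnDeriv_withDensity _ (by fun_prop)

lemma llr_prod_eq_llr_prod_map_add {μ : Measure (α × β)} [IsFiniteMeasure μ]
    {ν₁ : Measure α} {ν₂ : Measure β} [SigmaFinite ν₁] [SigmaFinite ν₂]
    (hμ : μ ≪ (μ.map Prod.fst).prod (μ.map Prod.snd))
    (h₁ : μ.map Prod.fst ≪ ν₁) (h₂ : μ.map Prod.snd ≪ ν₂) :
    llr μ (ν₁.prod ν₂) =ᵐ[μ] fun z ↦ llr μ ((μ.map Prod.fst).prod (μ.map Prod.snd)) z +
      llr (μ.map Prod.fst) ν₁ z.1 + llr (μ.map Prod.snd) ν₂ z.2 := by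
  set μ₁ := μ.map Prod.fst
  set μ₂ := μ.map Prod.snd
  have hμν : μ ≪ ν₁.prod ν₂ := hμ.trans (h₁.prod h₂)
  have hpos₁ : ∀ᵐ z ∂μ, 0 < μ₁.rnDeriv ν₁ z.1 ∧ μ₁.rnDeriv ν₁ z.1 < ∞ :=
    ae_of_ae_map (by fun_prop)
      ((Measure.rnDeriv_pos h₁).and (h₁.ae_le (Measure.rnDeriv_lt_top _ _)))
  have hpos₂ : ∀ᵐ z ∂μ, 0 < μ₂.rnDeriv ν₂ z.2 ∧ μ₂.rnDeriv ν₂ z.2 < ∞ :=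
    ae_of_ae_map (by fun_prop)
      ((Measure.rnDeriv_pos h₂).and (h₂.ae_le (Measure.rnDeriv_lt_top _ _)))
  filter_upwards [hμν.ae_le (Measure.rnDeriv_mul_rnDeriv hμ),
    hμν.ae_le (Measure.rnDeriv_prod_prod h₁ h₂), Measure.rnDeriv_pos hμ,
    hμ.ae_le (Measure.rnDeriv_lt_top μ _), hpos₁, hpos₂] with z hchain hprod hpos hlt h₁z h₂z
  simp only [llr, ← hchain, Pi.mul_apply, hprod, ENNReal.toReal_mul]
  have hne {a : ℝ≥0∞} (h₀ : 0 < a) (h : a < ∞) : a.toReal ≠ 0 :=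
    (ENNReal.toReal_pos h₀.ne' h.ne).ne'
  rw [Real.log_mul (hne hpos hlt) (mul_ne_zero (hne h₁z.1 h₁z.2) (hne h₂z.1 h₂z.2)),
    Real.log_mul (hne h₁z.1 h₁z.2) (hne h₂z.1 h₂z.2), add_assoc]

lemma integral_llr_nonneg {μ ν : Measure α} [IsProbabilityMeasure μ] [IsProbabilityMeasure ν]
    (hμν : μ ≪ ν) (hint : Integrable (llr μ ν) μ) : 0 ≤ ∫ x, llr μ ν x ∂μ := by
  simpa using InformationTheory.integral_llr_add_sub_measure_univ_nonneg hμν hint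

lemma mutualInfoOfJoint_le_integral_llr_prod {μ : Measure (α × β)} [IsProbabilityMeasure μ]
    {ν₁ : Measure α} {ν₂ : Measure β} [IsProbabilityMeasure ν₁] [IsProbabilityMeasure ν₂]
    (hμ : μ ≪ (μ.map Prod.fst).prod (μ.map Prod.snd))
    (h₁ : μ.map Prod.fst ≪ ν₁) (h₂ : μ.map Prod.snd ≪ ν₂)
    (hint : Integrable (llr μ (ν₁.prod ν₂)) μ)
    (hint₁ : Integrable (llr (μ.map Prod.fst) ν₁) (μ.map Prod.fst))
    (hint₂ : Integrable (llr (μ.map Prod.snd) ν₂) (μ.map Prod.snd)) :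
    mutualInfoOfJoint μ ≤ ∫ z, llr μ (ν₁.prod ν₂) z ∂μ := by
  have hint₁' : Integrable (fun z ↦ llr (μ.map Prod.fst) ν₁ z.1) μ :=
    hint₁.comp_measurable measurable_fst
  have hint₂' : Integrable (fun z ↦ llr (μ.map Prod.snd) ν₂ z.2) μ :=
    hint₂.comp_measurable measurable_snd
  have hI : ∫ z, llr μ ((μ.map Prod.fst).prod (μ.map Prod.snd)) z ∂μ =
      ∫ z, llr μ (ν₁.prod ν₂) z ∂μ - ∫ x, llr (μ.map Prod.fst) ν₁ x ∂μ.map Prod.fst -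
        ∫ y, llr (μ.map Prod.snd) ν₂ y ∂μ.map Prod.snd := by
    rw [integral_map (by fun_prop) (measurable_llr _ _).aestronglyMeasurable,
      integral_map (by fun_prop) (measurable_llr _ _).aestronglyMeasurable,
      ← integral_sub hint hint₁',
      ← integral_sub (f := fun z ↦ llr μ (ν₁.prod ν₂) z - llr (μ.map Prod.fst) ν₁ z.1)
        (hint.sub hint₁') hint₂']
    refine integral_congr_ae ?_
    filter_upwards [llr_prod_eq_llr_prod_map_add hμ h₁ h₂] with z hz
    rw [hz]
    ring
  have := Measure.isProbabilityMeasure_map (μ := μ) measurable_fst.aemeasurable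
  have := Measure.isProbabilityMeasure_map (μ := μ) measurable_snd.aemeasurable
  rw [mutualInfoOfJoint, ← llr_def, hI]
  linarith [integral_llr_nonneg h₁ hint₁, integral_llr_nonneg h₂ hint₂]

lemma mutualInfoOfJoint_le_log_of_le_smul_prod {μ : Measure (α × β)} [IsProbabilityMeasure μ]
    {ν₁ : Measure α} {ν₂ : Measure β} [IsProbabilityMeasure ν₁] [IsProbabilityMeasure ν₂]
    (hμ : μ ≪ (μ.map Prod.fst).prod (μ.map Prod.snd)) {c : ℝ≥0}
    (h : μ ≤ (c : ℝ≥0∞) • ν₁.prod ν₂) :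
    mutualInfoOfJoint μ ≤ Real.log c := by
  have h₁ : μ.map Prod.fst ≤ (c : ℝ≥0∞) • ν₁ := by
    simpa [Measure.map_smul] using Measure.map_mono h measurable_fst
  have h₂ : μ.map Prod.snd ≤ (c : ℝ≥0∞) • ν₂ := by
    simpa [Measure.map_smul] using Measure.map_mono h measurable_snd
  calc mutualInfoOfJoint μ ≤ ∫ z, llr μ (ν₁.prod ν₂) z ∂μ :=
        mutualInfoOfJoint_le_integral_llr_prod hμ (Measure.absolutelyContinuous_of_le_smul h₁)
          (Measure.absolutelyContinuous_of_le_smul h₂) (integrable_llr_of_le_smul h)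
          (integrable_llr_of_le_smul h₁) (integrable_llr_of_le_smul h₂)
    _ ≤ Real.log c := integral_llr_le_log_of_le_smul h

lemma Measure.map_selected_le_card_smul {Ω ι γ : Type*} [MeasurableSpace Ω] [MeasurableSpace γ]
    [Fintype ι] {P : Measure Ω} {X : ι → Ω → γ} {ν : Measure γ}
    (hX : ∀ i, Measurable (X i)) (hlaw : ∀ i, P.map (X i) = ν)
    {I : Ω → ι} (hsel : Measurable fun ω ↦ X (I ω) ω) :
    P.map (fun ω ↦ X (I ω) ω) ≤ (Fintype.card ι : ℝ≥0∞) • ν := by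
  refine Measure.le_iff.2 fun s hs ↦ ?_
  calc P.map (fun ω ↦ X (I ω) ω) s ≤ P (⋃ i, X i ⁻¹' s) := by
        rw [Measure.map_apply hsel hs]
        exact measure_mono fun ω hω ↦ Set.mem_iUnion.2 ⟨I ω, hω⟩
    _ ≤ ∑ i, P (X i ⁻¹' s) := measure_iUnion_fintype_le P _
    _ = ((Fintype.card ι : ℝ≥0∞) • ν) s := by
        simp [← Measure.map_apply (hX _) hs, hlaw]

end MeasureTheory

theorem selected_pair_mutual_information_bound_general
    {Ω : Type*} [MeasureSpace Ω] [IsProbabilityMeasure (ℙ : Measure Ω)]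
    {α β : Type*} [MeasurableSpace α] [MeasurableSpace β]
    (J : ℕ) (hJ : 1 ≤ J)
    (V : Fin J → Ω → α) (F : Fin J → Ω → β)
    (hVmeas : ∀ j, Measurable (V j)) (hFmeas : ∀ j, Measurable (F j))
    (hident : ∀ j j' : Fin J,
      Measure.map (fun ω => (V j ω, F j ω)) ℙ = Measure.map (fun ω => (V j' ω, F j' ω)) ℙ)
    (hpairindep : ∀ j, IndepFun (V j) (F j) ℙ)
    (jhat : Ω → Fin J)
    (hsel_meas : Measurable fun ω => (V (jhat ω) ω, F (jhat ω) ω))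
    (hac : Measure.map (fun ω => (V (jhat ω) ω, F (jhat ω) ω)) ℙ ≪
      ((Measure.map (fun ω => (V (jhat ω) ω, F (jhat ω) ω)) ℙ).map Prod.fst).prod
        ((Measure.map (fun ω => (V (jhat ω) ω, F (jhat ω) ω)) ℙ).map Prod.snd)) :
    mutualInfoOfJoint (Measure.map (fun ω => (V (jhat ω) ω, F (jhat ω) ω)) ℙ) ≤
        Real.log J + 2 / Real.exp 1 ∧
      Real.log J + 2 / Real.exp 1 ≤ Real.log J + 1 := by
  let j₀ : Fin J := ⟨0, hJ⟩
  have := Measure.isProbabilityMeasure_map (μ := ℙ) hsel_meas.aemeasurable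
  have := Measure.isProbabilityMeasure_map (μ := ℙ) (hVmeas j₀).aemeasurable
  have := Measure.isProbabilityMeasure_map (μ := ℙ) (hFmeas j₀).aemeasurable
  have hlaw : Measure.map (fun ω => (V j₀ ω, F j₀ ω)) ℙ =
      (Measure.map (V j₀) ℙ).prod (Measure.map (F j₀) ℙ) :=
    (indepFun_iff_map_prod_eq_prod_map_map (hVmeas j₀).aemeasurable
      (hFmeas j₀).aemeasurable).1 (hpairindep j₀)
  have hle : Measure.map (fun ω => (V (jhat ω) ω, F (jhat ω) ω)) ℙ ≤
      ((J : ℝ≥0) : ℝ≥0∞) • (Measure.map (V j₀) ℙ).prod (Measure.map (F j₀) ℙ) := by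
    simpa [hlaw] using Measure.map_selected_le_card_smul
      (fun j ↦ (hVmeas j).prodMk (hFmeas j)) (fun j ↦ hident j j₀) hsel_meas
  have htwo_div_exp : 2 / Real.exp 1 ≤ 1 :=
    (div_le_one (Real.exp_pos 1)).2 (by linarith [Real.add_one_le_exp (1 : ℝ)])
  refine ⟨?_, by linarith⟩
  calc _ ≤ Real.log J := by simpa using mutualInfoOfJoint_le_log_of_le_smul_prod hac hle
    _ ≤ Real.log J + 2 / Real.exp 1 := le_add_of_nonneg_right (by positivity)

/-- Let `(V j, F j)` for `j < J` be i.i.d. pairs such that within each pair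
`V j` and `F j` are independent, and let `ĵ` be any index which is a measurable function of
all the pairs.  Then the mutual information of the selected pair `(V ĵ, F ĵ)` is at most
`ln J + 2/e ≤ ln J + 1`.  (The regularity hypotheses — absolute continuity of the selected
joint law with respect to the product of its marginals, and integrability of the log-density —
encode the assumption that all variables have densities.) -/
theorem selected_pair_mutual_information_bound
    {Ω : Type*} [MeasureSpace Ω] [IsProbabilityMeasure (ℙ : Measure Ω)]
    {α β : Type*} [MeasurableSpace α] [MeasurableSpace β]
    (J : ℕ) (hJ : 1 ≤ J)
    (V : Fin J → Ω → α) (F : Fin J → Ω → β)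
    (hVmeas : ∀ j, Measurable (V j)) (hFmeas : ∀ j, Measurable (F j))
    (hiid : iIndepFun (fun j ω => (V j ω, F j ω)) ℙ)
    (hident : ∀ j j' : Fin J,
      Measure.map (fun ω => (V j ω, F j ω)) ℙ = Measure.map (fun ω => (V j' ω, F j' ω)) ℙ)
    (hpairindep : ∀ j, IndepFun (V j) (F j) ℙ)
    (jhat : Ω → Fin J)
    (hjhat : Measurable jhat)
    (hjhat_fn : ∃ φ : (Fin J → α × β) → Fin J, Measurable φ ∧
      ∀ ω, jhat ω = φ (fun j => (V j ω, F j ω)))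
    (hsel_meas : Measurable fun ω => (V (jhat ω) ω, F (jhat ω) ω))
    (hac : Measure.map (fun ω => (V (jhat ω) ω, F (jhat ω) ω)) ℙ ≪
      ((Measure.map (fun ω => (V (jhat ω) ω, F (jhat ω) ω)) ℙ).map Prod.fst).prod
        ((Measure.map (fun ω => (V (jhat ω) ω, F (jhat ω) ω)) ℙ).map Prod.snd))
    (hint : Integrable
      (fun p => Real.log
        (((Measure.map (fun ω => (V (jhat ω) ω, F (jhat ω) ω)) ℙ).rnDeriv
          (((Measure.map (fun ω => (V (jhat ω) ω, F (jhat ω) ω)) ℙ).map Prod.fst).prod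
            ((Measure.map (fun ω => (V (jhat ω) ω, F (jhat ω) ω)) ℙ).map Prod.snd)) p).toReal))
      (Measure.map (fun ω => (V (jhat ω) ω, F (jhat ω) ω)) ℙ)) :
    mutualInfoOfJoint (Measure.map (fun ω => (V (jhat ω) ω, F (jhat ω) ω)) ℙ) ≤
        Real.log J + 2 / Real.exp 1 ∧
      Real.log J + 2 / Real.exp 1 ≤ Real.log J + 1 :=
  selected_pair_mutual_information_bound_general J hJ V F hVmeas hFmeas hident hpairindep jhat
    hsel_meas hac
end
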